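/- arXiv:2202.00954 — 3 statements merged into one kernel-verified Lean document; each statement's English description precedes it below -/
import Mathlib

section
/- For every multi-marginal transport plan π ∈ Π(μ¹,…,μ^N), one has Φ(π) ≥ Ψ((M_λ)_# π), i.e. the MOT cost of π is at least the barycenter objective evaluated at the pushforward of π under the weighted mean map. -/
open MeasureTheory
open scoped ENNReal

noncomputable section

/-- Points of the `d`-dimensional Euclidean space. -/
abbrev Pt (d : ℕ) := EuclideanSpace ℝ (Fin d)

/-- A measure is finitely supported if it vanishes outside a finite set. -/
def FinitelySupported {α : Type*} [MeasurableSpace α] (μ : Measure α) : Prop :=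
  ∃ s : Finset α, μ ((s : Set α)ᶜ) = 0

/-- `λ` lies in the open probability simplex. -/
def InSimplex {N : ℕ} (l : Fin N → ℝ) : Prop :=
  (∀ i, 0 < l i) ∧ ∑ i, l i = 1

/-- `π` is a multi-marginal transport plan with marginals `μ i`. -/
def IsPlan {d N : ℕ} (μ : Fin N → Measure (Pt d)) (π : Measure (Fin N → Pt d)) : Prop :=
  IsProbabilityMeasure π ∧ ∀ i, π.map (fun x => x i) = μ i

/-- The multi-marginal optimal transport cost `Φ(π)`. -/
def MOT {d N : ℕ} (l : Fin N → ℝ) (π : Measure (Fin N → Pt d)) : ℝ≥0∞ :=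
  ∫⁻ x, ∑ s : Fin N, ∑ t : Fin N,
    (if s < t then ENNReal.ofReal (l s * l t * ‖x s - x t‖ ^ 2) else 0) ∂π

/-- `π` is a coupling of `μ` and `ν`. -/
def IsCoupling {α : Type*} [MeasurableSpace α] (μ ν : Measure α) (π : Measure (α × α)) : Prop :=
  IsProbabilityMeasure π ∧ π.map Prod.fst = μ ∧ π.map Prod.snd = ν

/-- The squared Wasserstein-2 distance: the optimal squared-Euclidean transport cost
over all couplings. -/
def W2sq {d : ℕ} (μ ν : Measure (Pt d)) : ℝ≥0∞ :=
  sInf { c : ℝ≥0∞ | ∃ π : Measure (Pt d × Pt d), IsCoupling μ ν π ∧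
    c = ∫⁻ p, ENNReal.ofReal (‖p.1 - p.2‖ ^ 2) ∂π }

/-- The barycenter objective `Ψ(ν) = ∑ i λ i * W₂²(μ i, ν)`. -/
def Psi {d N : ℕ} (l : Fin N → ℝ) (μ : Fin N → Measure (Pt d)) (ν : Measure (Pt d)) : ℝ≥0∞ :=
  ∑ i, ENNReal.ofReal (l i) * W2sq (μ i) ν

/-- The `λ`-weighted mean map `M_λ`. -/
def wmean {d N : ℕ} (l : Fin N → ℝ) (x : Fin N → Pt d) : Pt d :=
  ∑ i, l i • x i

/-- The support-as-atoms of a measure. -/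
def msupport {α : Type*} [MeasurableSpace α] (μ : Measure α) : Set α :=
  {x | μ {x} ≠ 0}

/-!
Pointwise, the MOT cost is a weighted variance: for weights summing to one,
`∑_{s<t} λ_s λ_t ‖x_s − x_t‖² = ∑_i λ_i ‖x_i − M_λ x‖²`.
For each `i`, the image of `π` under `x ↦ (x_i, M_λ x)` couples `μ^i` with `(M_λ)_# π`, so its
cost `∫ ‖x_i − M_λ x‖² dπ` bounds `W₂²(μ^i, (M_λ)_# π)`. Summing with weights `λ_i` gives the claim.
-/

open Finset

theorem Finset.sum_sum_eq_two_nsmul_sum_sum_ite_lt {ι M : Type*} [Fintype ι] [LinearOrder ι]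
    [AddCommMonoid M] (f : ι → ι → M) (hsymm : ∀ s t, f s t = f t s) (hdiag : ∀ s, f s s = 0) :
    ∑ s, ∑ t, f s t = 2 • ∑ s, ∑ t, if s < t then f s t else 0 := by
  have hsplit : ∀ s t, f s t = (if s < t then f s t else 0) + (if t < s then f t s else 0) := by
    intro s t
    rcases lt_trichotomy s t with h | rfl | h
    · simp [h, h.not_gt]
    · simp [hdiag]
    · simp [h, h.not_gt, hsymm s t]
  calc ∑ s, ∑ t, f s t
      = ∑ s, ∑ t, ((if s < t then f s t else 0) + (if t < s then f t s else 0)) :=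
        sum_congr rfl fun s _ => sum_congr rfl fun t _ => hsplit s t
    _ = 2 • ∑ s, ∑ t, if s < t then f s t else 0 := by
        simp only [sum_add_distrib]
        rw [two_nsmul, sum_comm (f := fun s t => if t < s then f t s else 0)]

section Variance

variable {E ι : Type*} [NormedAddCommGroup E] [InnerProductSpace ℝ E] [Fintype ι]

theorem sum_smul_sub_weighted_mean {w : ι → ℝ} (hw : ∑ i, w i = 1) (x : ι → E) :
    ∑ i, w i • (x i - ∑ j, w j • x j) = 0 := by
  simp_rw [smul_sub, sum_sub_distrib, ← sum_smul, hw, one_smul, sub_self]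

theorem sum_sum_mul_norm_sub_sq {w : ι → ℝ} (hw : ∑ i, w i = 1) (x : ι → E) :
    ∑ s, ∑ t, w s * w t * ‖x s - x t‖ ^ 2 = 2 * ∑ i, w i * ‖x i - ∑ j, w j • x j‖ ^ 2 := by
  set y : ι → E := fun i => x i - ∑ j, w j • x j
  have hxy : ∀ s t, x s - x t = y s - y t := fun s t => by simp [y]
  have hcross : ∑ s, ∑ t, w s * w t * inner ℝ (y s) (y t) = 0 := by
    have hmean : ∑ i, w i • y i = 0 := sum_smul_sub_weighted_mean hw x
    calc ∑ s, ∑ t, w s * w t * inner ℝ (y s) (y t)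
        = inner ℝ (∑ s, w s • y s) (∑ t, w t • y t) := by
          simp only [sum_inner, inner_sum, real_inner_smul_left, real_inner_smul_right, mul_assoc]
          exact sum_congr rfl fun s _ => sum_congr rfl fun t _ => by rw [real_inner_comm]
      _ = 0 := by rw [hmean, inner_zero_left]
  calc ∑ s, ∑ t, w s * w t * ‖x s - x t‖ ^ 2
      = ∑ s, ∑ t, (w t * (w s * ‖y s‖ ^ 2) + w s * (w t * ‖y t‖ ^ 2)
          - 2 * (w s * w t * inner ℝ (y s) (y t))) := by
        refine sum_congr rfl fun s _ => sum_congr rfl fun t _ => ?_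
        rw [hxy, norm_sub_sq_real]
        ring
    _ = 2 * ∑ i, w i * ‖y i‖ ^ 2 := by
        simp only [sum_sub_distrib, sum_add_distrib, ← sum_mul, ← mul_sum, hw, ← mul_sum,
          hcross]
        ring

theorem sum_mul_norm_sub_weighted_mean_sq [LinearOrder ι] {w : ι → ℝ} (hw : ∑ i, w i = 1)
    (x : ι → E) :
    ∑ i, w i * ‖x i - ∑ j, w j • x j‖ ^ 2
      = ∑ s, ∑ t, if s < t then w s * w t * ‖x s - x t‖ ^ 2 else 0 := by
  have h := Finset.sum_sum_eq_two_nsmul_sum_sum_ite_lt (fun s t => w s * w t * ‖x s - x t‖ ^ 2)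
    (fun s t => by rw [norm_sub_rev]; ring) (fun s => by simp)
  rw [sum_sum_mul_norm_sub_sq hw, nsmul_eq_mul, Nat.cast_two] at h
  linarith

end Variance

section Transport

variable {d N : ℕ}

theorem W2sq_le_lintegral_of_isCoupling {μ ν : Measure (Pt d)} {γ : Measure (Pt d × Pt d)}
    (hγ : IsCoupling μ ν γ) : W2sq μ ν ≤ ∫⁻ p, ENNReal.ofReal (‖p.1 - p.2‖ ^ 2) ∂γ :=
  sInf_le ⟨γ, hγ, rfl⟩

theorem W2sq_map_le_lintegral {α : Type*} [MeasurableSpace α] (π : Measure α)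
    [IsProbabilityMeasure π] {f g : α → Pt d} (hf : Measurable f) (hg : Measurable g) :
    W2sq (π.map f) (π.map g) ≤ ∫⁻ a, ENNReal.ofReal (‖f a - g a‖ ^ 2) ∂π := by
  have hfg : Measurable fun a => (f a, g a) := hf.prodMk hg
  have hcost : Measurable fun p : Pt d × Pt d => ENNReal.ofReal (‖p.1 - p.2‖ ^ 2) := by
    fun_prop
  calc W2sq (π.map f) (π.map g)
      ≤ ∫⁻ p, ENNReal.ofReal (‖p.1 - p.2‖ ^ 2) ∂π.map fun a => (f a, g a) :=
        W2sq_le_lintegral_of_isCoupling ⟨Measure.isProbabilityMeasure_map hfg.aemeasurable,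
          by rw [Measure.map_map measurable_fst hfg]; rfl,
          by rw [Measure.map_map measurable_snd hfg]; rfl⟩
    _ = ∫⁻ a, ENNReal.ofReal (‖f a - g a‖ ^ 2) ∂π := lintegral_map hcost hfg

theorem measurable_wmean (l : Fin N → ℝ) : Measurable (wmean (d := d) l) :=
  Finset.measurable_sum _ fun i _ => (measurable_pi_apply i).const_smul (l i)

theorem sum_ofReal_mul_norm_sub_wmean_sq {l : Fin N → ℝ} (hl : InSimplex l)
    (x : Fin N → Pt d) :
    ∑ i, ENNReal.ofReal (l i) * ENNReal.ofReal (‖x i - wmean l x‖ ^ 2)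
      = ∑ s, ∑ t, if s < t then ENNReal.ofReal (l s * l t * ‖x s - x t‖ ^ 2) else 0 := by
  have hterm_nonneg : ∀ s t, 0 ≤ if s < t then l s * l t * ‖x s - x t‖ ^ 2 else 0 := by
    intro s t
    split_ifs
    · exact mul_nonneg (mul_nonneg (hl.1 s).le (hl.1 t).le) (sq_nonneg _)
    · exact le_rfl
  simp_rw [← ENNReal.ofReal_mul (hl.1 _).le, ← ENNReal.ofReal_zero, ← apply_ite ENNReal.ofReal]
  rw [← ENNReal.ofReal_sum_of_nonneg fun i _ => mul_nonneg (hl.1 i).le (sq_nonneg _),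
    wmean, sum_mul_norm_sub_weighted_mean_sq hl.2,
    ENNReal.ofReal_sum_of_nonneg fun s _ => sum_nonneg fun t _ => hterm_nonneg s t]
  exact sum_congr rfl fun s _ => ENNReal.ofReal_sum_of_nonneg fun t _ => hterm_nonneg s t

end Transport

theorem stmt1_general {d N : ℕ} (μ : Fin N → Measure (Pt d))
    (l : Fin N → ℝ) (hl : InSimplex l)
    (π : Measure (Fin N → Pt d)) (hπ : IsPlan μ π) :
    Psi l μ (π.map (wmean l)) ≤ MOT l π := by
  obtain ⟨hπ_prob, hmarg⟩ := hπ
  have hterm : ∀ i, Measurable fun x : Fin N → Pt d => ENNReal.ofReal (‖x i - wmean l x‖ ^ 2) :=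
    fun i => (((measurable_pi_apply i).sub (measurable_wmean l)).norm.pow_const 2).ennreal_ofReal
  calc Psi l μ (π.map (wmean l))
      ≤ ∑ i, ENNReal.ofReal (l i) * ∫⁻ x, ENNReal.ofReal (‖x i - wmean l x‖ ^ 2) ∂π := by
        refine sum_le_sum fun i _ => mul_le_mul_right ?_ _
        rw [← hmarg i]
        exact W2sq_map_le_lintegral π (measurable_pi_apply i) (measurable_wmean l)
    _ = ∫⁻ x, ∑ i, ENNReal.ofReal (l i) * ENNReal.ofReal (‖x i - wmean l x‖ ^ 2) ∂π := by
        rw [lintegral_finsetSum _ fun i _ => (hterm i).const_mul _]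
        exact sum_congr rfl fun i _ => (lintegral_const_mul _ (hterm i)).symm
    _ = MOT l π := lintegral_congr fun x => sum_ofReal_mul_norm_sub_wmean_sq hl x

/-- For every multi-marginal plan `π ∈ Π(μ¹,…,μ^N)`,
`Φ(π) ≥ Ψ((M_λ)_# π)`. -/
theorem stmt1 {d N : ℕ} (μ : Fin N → Measure (Pt d))
    (hμ : ∀ i, IsProbabilityMeasure (μ i) ∧ FinitelySupported (μ i))
    (l : Fin N → ℝ) (hl : InSimplex l)
    (π : Measure (Fin N → Pt d)) (hπ : IsPlan μ π) :
    Psi l μ (π.map (wmean l)) ≤ MOT l π :=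
  stmt1_general μ l hl π hπ
end
end

section
/- There exists an optimal plan π̂ for the MOT problem (a minimizer of Φ over Π(μ¹,…,μ^N)) whose support has cardinality at most Σ_{i=1}^N n_i − N + 1. -/
open MeasureTheory
open scoped ENNReal

noncomputable section

/-!
Every transport plan is concentrated on the finite grid `∏ i, supp i`, so plans are exactly the
weightings `w ≥ 0` of the grid with total mass `1` and marginals `μ i`, and `Φ` is linear in `w`.
This is a linear program `min w ⬝ᵥ c` over `{w ≥ 0, A w = b}`. A minimizer of minimal support is a
basic solution: were its support larger than `rank A`, a kernel vector of `A` supported inside it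
would move it, without raising the cost, to a minimizer of smaller support (the ratio test).
Every marginal of `w` carries the total mass of `w`; these are `N` independent linear relations on
the image of `A`, so `rank A ≤ 1 + ∑ i, n_i - N`.
-/

open Finset Module Matrix

section LinearProgram

variable {ι V : Type*} [AddCommGroup V] [Module ℝ V]

def extendByZero [DecidableEq ι] (s : Finset ι) : (s → ℝ) →ₗ[ℝ] (ι → ℝ) :=
  LinearMap.pi fun i => if h : i ∈ s then LinearMap.proj ⟨i, h⟩ else 0

lemma extendByZero_apply [DecidableEq ι] (s : Finset ι) (u : s → ℝ) (i : ι) :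
    extendByZero s u i = if h : i ∈ s then u ⟨i, h⟩ else 0 := by
  unfold extendByZero
  split_ifs <;> simp [*]

def feasibleSet (A : (ι → ℝ) →ₗ[ℝ] V) (b : V) : Set (ι → ℝ) := {w | 0 ≤ w ∧ A w = b}

variable [Fintype ι]

lemma exists_ne_zero_map_eq_zero_of_finrank_range_lt (A : (ι → ℝ) →ₗ[ℝ] V) {s : Finset ι}
    (hs : finrank ℝ (LinearMap.range A) < #s) :
    ∃ v, v ≠ 0 ∧ A v = 0 ∧ ∀ i ∉ s, v i = 0 := by
  classical
  have hker : LinearMap.ker (A ∘ₗ extendByZero s) ≠ ⊥ := by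
    have hrange := Submodule.finrank_mono (LinearMap.range_comp_le_range (extendByZero s) A)
    have hrank := (A ∘ₗ extendByZero s).finrank_range_add_finrank_ker
    rw [finrank_fintype_fun_eq_card, Fintype.card_coe] at hrank
    exact Submodule.one_le_finrank_iff.1 (by omega)
  obtain ⟨u, hu, hu0⟩ := Submodule.exists_mem_ne_zero_of_ne_bot hker
  refine ⟨extendByZero s u, fun h => hu0 (funext fun i => ?_), hu, fun i hi => ?_⟩
  · simpa [extendByZero_apply] using congrFun h i
  · simp [extendByZero_apply, hi]

-- The ratio test: step along `u` until the first coordinate where `u` is negative vanishes.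
lemma exists_add_smul_mem_feasibleSet_card_support_lt {A : (ι → ℝ) →ₗ[ℝ] V} {b : V}
    {w u : ι → ℝ} (hw : w ∈ feasibleSet A b) (hAu : A u = 0) (hsupp : ∀ i, w i = 0 → u i = 0)
    (hneg : ∃ j, u j < 0) :
    ∃ t : ℝ, 0 ≤ t ∧ w + t • u ∈ feasibleSet A b ∧
      #{i | (w + t • u) i ≠ 0} < #{i | w i ≠ 0} := by
  classical
  have hT : ({j | u j < 0} : Finset ι).Nonempty := by
    obtain ⟨j, hj⟩ := hneg
    exact ⟨j, by simpa using hj⟩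
  obtain ⟨j, hj, hjmin⟩ := exists_min_image _ (fun j => w j / -u j) hT
  rw [mem_filter_univ] at hj
  have hwj : w j ≠ 0 := fun h => hj.ne (hsupp j h)
  set t := w j / -u j
  have ht : 0 ≤ t := div_nonneg (hw.1 j) (neg_pos.2 hj).le
  have hstep (i : ι) : 0 ≤ w i + t * u i := by
    rcases lt_or_ge (u i) 0 with hi | hi
    · have := (le_div_iff₀ (neg_pos.2 hi)).1 (hjmin i ((mem_filter_univ _).2 hi))
      linarith
    · exact add_nonneg (hw.1 i) (mul_nonneg ht hi)
  refine ⟨t, ht, ⟨fun i => by simpa using hstep i, by simp [hw.2, hAu]⟩, ?_⟩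
  have hsub : ({i | (w + t • u) i ≠ 0} : Finset ι) ⊆ ({i | w i ≠ 0} : Finset ι).erase j := by
    intro i
    simp only [mem_filter_univ, mem_erase, Pi.add_apply, Pi.smul_apply, smul_eq_mul]
    refine fun hi => ⟨?_, fun h => hi (by simp [h, hsupp])⟩
    rintro rfl
    exact hi (by simp only [t]; field_simp [hj.ne]; ring)
  exact (card_le_card hsub).trans_lt (card_erase_lt_of_mem ((mem_filter_univ _).2 hwj))

lemma dotProduct_nonneg_of_isMinOn {A : (ι → ℝ) →ₗ[ℝ] V} {b : V} {c w u : ι → ℝ}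
    (hw : w ∈ feasibleSet A b) (hmin : IsMinOn (· ⬝ᵥ c) (feasibleSet A b) w) (hAu : A u = 0)
    (hu : 0 ≤ u) : 0 ≤ u ⬝ᵥ c := by
  have := isMinOn_iff.1 hmin (w + u) ⟨add_nonneg hw.1 hu, by simp [hw.2, hAu]⟩
  rw [add_dotProduct] at this
  linarith

-- Of `±v` take the one that does not raise the cost; if it is `≥ 0`, minimality makes its cost
-- zero, and its negative has a negative coordinate.
lemma exists_descent_direction {A : (ι → ℝ) →ₗ[ℝ] V} {b : V} {c w v : ι → ℝ}
    (hw : w ∈ feasibleSet A b) (hmin : IsMinOn (· ⬝ᵥ c) (feasibleSet A b) w) (hv : v ≠ 0)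
    (hAv : A v = 0) :
    ∃ u, A u = 0 ∧ (∀ i, v i = 0 → u i = 0) ∧ (∃ j, u j < 0) ∧ u ⬝ᵥ c ≤ 0 := by
  wlog hvc : v ⬝ᵥ c ≤ 0 generalizing v
  · obtain ⟨u, hAu, hus, hneg, huc⟩ :=
      this (neg_ne_zero.2 hv) (by simp [hAv]) (by rw [neg_dotProduct]; linarith)
    exact ⟨u, hAu, fun i hi => hus i (by simp [hi]), hneg, huc⟩
  by_cases hneg : ∃ j, v j < 0
  · exact ⟨v, hAv, fun _ h => h, hneg, hvc⟩
  simp only [not_exists, not_lt] at hneg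
  have hvc' := dotProduct_nonneg_of_isMinOn hw hmin hAv hneg
  obtain ⟨j, hj⟩ := Function.ne_iff.1 hv
  refine ⟨-v, by simp [hAv], fun i hi => by simp [hi], ⟨j, ?_⟩, by rw [neg_dotProduct]; linarith⟩
  simpa using lt_of_le_of_ne (hneg j) (Ne.symm hj)

theorem exists_isMinOn_card_support_le_of_isMinOn {A : (ι → ℝ) →ₗ[ℝ] V} {b : V}
    {c w₀ : ι → ℝ} (hw₀ : w₀ ∈ feasibleSet A b) (hmin : IsMinOn (· ⬝ᵥ c) (feasibleSet A b) w₀) :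
    ∃ w ∈ feasibleSet A b, IsMinOn (· ⬝ᵥ c) (feasibleSet A b) w ∧
      #{i | w i ≠ 0} ≤ finrank ℝ (LinearMap.range A) := by
  induction hk : #{i | w₀ i ≠ 0} using Nat.strong_induction_on generalizing w₀ with
  | _ k ih =>
  by_cases hk' : k ≤ finrank ℝ (LinearMap.range A)
  · exact ⟨w₀, hw₀, hmin, hk ▸ hk'⟩
  obtain ⟨v, hv, hAv, hvs⟩ :=
    exists_ne_zero_map_eq_zero_of_finrank_range_lt A (s := {i | w₀ i ≠ 0}) (by omega)
  obtain ⟨u, hAu, hus, hneg, huc⟩ := exists_descent_direction hw₀ hmin hv hAv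
  obtain ⟨t, ht, hmem, hcard⟩ := exists_add_smul_mem_feasibleSet_card_support_lt hw₀ hAu
    (fun i hi => hus i (hvs i (by simpa using hi))) hneg
  refine ih _ (hk ▸ hcard) hmem (isMinOn_iff.2 fun w hw => ?_) rfl
  calc (w₀ + t • u) ⬝ᵥ c = w₀ ⬝ᵥ c + t * (u ⬝ᵥ c) := by
        rw [add_dotProduct, smul_dotProduct, smul_eq_mul]
    _ ≤ w₀ ⬝ᵥ c := by linarith [mul_nonpos_of_nonneg_of_nonpos ht huc]
    _ ≤ w ⬝ᵥ c := isMinOn_iff.1 hmin w hw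

theorem exists_isMinOn_card_support_le {A : (ι → ℝ) →ₗ[ℝ] V} {b : V} (c : ι → ℝ)
    (hne : (feasibleSet A b).Nonempty) (hcpt : IsCompact (feasibleSet A b)) :
    ∃ w ∈ feasibleSet A b, IsMinOn (· ⬝ᵥ c) (feasibleSet A b) w ∧
      #{i | w i ≠ 0} ≤ finrank ℝ (LinearMap.range A) :=
  let ⟨_, hw₀, hmin⟩ := hcpt.exists_isMinOn hne
    (continuous_id.dotProduct continuous_const).continuousOn
  exists_isMinOn_card_support_le_of_isMinOn hw₀ hmin

end LinearProgram

section Marginals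

variable {κ α : Type*} [DecidableEq α] (supp : κ → Finset α)

def marginalDefect : ℝ × ((i : κ) → supp i → ℝ) →ₗ[ℝ] (κ → ℝ) where
  toFun p i := ∑ y, p.2 i y - p.1
  map_add' p q := by ext i; simp [sum_add_distrib]; ring
  map_smul' r p := by ext i; simp [mul_sum, mul_sub]

lemma marginalDefect_surjective (hsupp : ∀ i, (supp i).Nonempty) :
    Function.Surjective (marginalDefect supp) := by
  intro f
  choose y₀ hy₀ using hsupp
  refine ⟨(0, fun i y => if y = ⟨y₀ i, hy₀ i⟩ then f i else 0), ?_⟩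
  ext i
  simp [marginalDefect]

variable [Fintype κ] [DecidableEq κ]

def gridEval (i : κ) (g : Fintype.piFinset supp) : supp i :=
  ⟨g.1 i, Fintype.mem_piFinset.1 g.2 i⟩

def massMarginals : (Fintype.piFinset supp → ℝ) →ₗ[ℝ] ℝ × ((i : κ) → supp i → ℝ) where
  toFun w := (∑ g, w g, fun i y => ∑ g with gridEval supp i g = y, w g)
  map_add' w w' := by simp [sum_add_distrib, Prod.ext_iff, funext_iff]
  map_smul' r w := by simp [mul_sum, Prod.ext_iff, funext_iff]

lemma range_massMarginals_le_ker_marginalDefect :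
    LinearMap.range (massMarginals supp) ≤ LinearMap.ker (marginalDefect supp) := by
  rintro _ ⟨w, rfl⟩
  ext i
  change ∑ y, ∑ g with gridEval supp i g = y, w g - ∑ g, w g = 0
  rw [sum_fiberwise, sub_self]

lemma finrank_range_massMarginals_add_card_le (hsupp : ∀ i, (supp i).Nonempty) :
    finrank ℝ (LinearMap.range (massMarginals supp)) + Fintype.card κ ≤ ∑ i, #(supp i) + 1 := by
  have hrank := (marginalDefect supp).finrank_range_add_finrank_ker
  rw [LinearMap.range_eq_top.2 (marginalDefect_surjective supp hsupp), finrank_top] at hrank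
  have := Submodule.finrank_mono (range_massMarginals_le_ker_marginalDefect supp)
  simp only [finrank_fintype_fun_eq_card, finrank_prod, finrank_self, finrank_pi_fintype,
    Fintype.card_coe] at hrank
  omega

lemma isCompact_feasibleSet_massMarginals (m : (i : κ) → supp i → ℝ) :
    IsCompact (feasibleSet (massMarginals supp) (1, m)) := by
  refine (isCompact_Icc (a := 0) (b := 1)).of_isClosed_subset ?_ fun w hw => ⟨hw.1, fun g => ?_⟩
  · exact (isClosed_le continuous_const continuous_id).inter
      (isClosed_eq (massMarginals supp).continuous_of_finiteDimensional continuous_const)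
  · calc w g ≤ ∑ g, w g := single_le_sum (fun g _ => hw.1 g) (mem_univ g)
      _ = 1 := congrArg Prod.fst hw.2

end Marginals

lemma msupport_subset_of_measure_compl_eq_zero {β : Type*} [MeasurableSpace β] {ν : Measure β}
    {t : Set β} (h : ν tᶜ = 0) : msupport ν ⊆ t := by
  intro x hx
  by_contra hxt
  exact hx (measure_mono_null (Set.singleton_subset_iff.2 hxt) h)

section WeightedDirac

variable {β : Type*} [MeasurableSpace β] {s : Finset β}

def weightedDirac (w : s → ℝ) : Measure β :=
  ∑ x, ENNReal.ofReal (w x) • Measure.dirac (x : β)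

lemma weightedDirac_univ {w : s → ℝ} (hw : 0 ≤ w) :
    weightedDirac w Set.univ = ENNReal.ofReal (∑ x, w x) := by
  simp [weightedDirac, ENNReal.ofReal_sum_of_nonneg fun x _ => hw x]

lemma map_weightedDirac {γ : Type*} [MeasurableSpace γ] {f : β → γ} (hf : Measurable f)
    (w : s → ℝ) :
    (weightedDirac w).map f = ∑ x, ENNReal.ofReal (w x) • Measure.dirac (f x) := by
  simp [weightedDirac, Measure.map_finset_sum hf.aemeasurable, Measure.map_smul,
    Measure.map_dirac' hf]

variable [MeasurableSingletonClass β]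

lemma weightedDirac_apply_singleton (w : s → ℝ) (x : s) :
    weightedDirac w {(x : β)} = ENNReal.ofReal (w x) := by
  classical
  simp [weightedDirac, Set.indicator_apply]

lemma weightedDirac_inj {w w' : s → ℝ} (hw : 0 ≤ w) (hw' : 0 ≤ w') :
    weightedDirac w = weightedDirac w' ↔ w = w' := by
  refine ⟨fun h => funext fun x => ?_, fun h => h ▸ rfl⟩
  have := congrArg (· {(x : β)}) h
  simpa [weightedDirac_apply_singleton, ENNReal.ofReal_eq_ofReal_iff (hw x) (hw' x)] using this

lemma weightedDirac_compl_eq_zero {w : s → ℝ} {t : Set β} (ht : ∀ x, w x ≠ 0 → (x : β) ∈ t) :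
    weightedDirac w tᶜ = 0 := by
  classical
  rw [weightedDirac, Measure.finsetSum_apply]
  refine sum_eq_zero fun x _ => ?_
  by_cases hx : w x = 0
  · simp [hx]
  · simp [Measure.dirac_apply, ht x hx]

lemma lintegral_weightedDirac {w : s → ℝ} (hw : 0 ≤ w) {F : β → ℝ≥0∞} (hF : ∀ x, F x ≠ ∞) :
    ∫⁻ x, F x ∂weightedDirac w = ENNReal.ofReal (w ⬝ᵥ fun x => (F x).toReal) := by
  rw [weightedDirac, lintegral_finsetSum_measure, dotProduct,
    ENNReal.ofReal_sum_of_nonneg fun x _ => mul_nonneg (hw x) ENNReal.toReal_nonneg]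
  refine sum_congr rfl fun x _ => ?_
  rw [lintegral_smul_measure, lintegral_dirac, ENNReal.ofReal_mul (hw x),
    ENNReal.ofReal_toReal (hF x), smul_eq_mul]

lemma eq_weightedDirac_measureReal (μ : Measure β) [IsFiniteMeasure μ]
    (h : μ (s : Set β)ᶜ = 0) :
    μ = weightedDirac fun x : s => μ.real {(x : β)} := by
  classical
  ext A hA
  rw [← measure_inter_conull h,
    show A ∩ s = ↑(s.filter (· ∈ A)) by ext; simp [and_comm], ← sum_measure_singleton,
    weightedDirac, Measure.finsetSum_apply, sum_filter, ← sum_coe_sort s]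
  refine sum_congr rfl fun x _ => ?_
  simp [Measure.dirac_apply' _ hA, Set.indicator_apply]

end WeightedDirac

lemma map_eval_weightedDirac {κ α : Type*} [Fintype κ] [DecidableEq κ] [DecidableEq α]
    [MeasurableSpace α] {supp : κ → Finset α} {w : Fintype.piFinset supp → ℝ} (hw : 0 ≤ w)
    (i : κ) :
    (weightedDirac w).map (fun x => x i) =
      weightedDirac fun y => (massMarginals supp w).2 i y := by
  rw [map_weightedDirac (measurable_pi_apply i), weightedDirac,
    ← sum_fiberwise univ (gridEval supp i)]
  refine sum_congr rfl fun y _ => ?_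
  rw [show (massMarginals supp w).2 i y = ∑ g with gridEval supp i g = y, w g from rfl,
    ENNReal.ofReal_sum_of_nonneg fun g _ => hw g, sum_smul]
  refine sum_congr rfl fun g hg => ?_
  rw [← (mem_filter.1 hg).2]
  rfl

section Plans

variable {d N : ℕ} {μ : Fin N → Measure (Pt d)} {supp : Fin N → Finset (Pt d)}

def planMasses (μ : Fin N → Measure (Pt d)) (supp : Fin N → Finset (Pt d)) :
    ℝ × ((i : Fin N) → supp i → ℝ) :=
  (1, fun i y => (μ i).real {(y : Pt d)})

lemma isPlan_weightedDirac_iff [∀ i, IsFiniteMeasure (μ i)]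
    (hsupp : ∀ i, μ i (supp i : Set (Pt d))ᶜ = 0) {w : Fintype.piFinset supp → ℝ} (hw : 0 ≤ w) :
    IsPlan μ (weightedDirac w) ↔ massMarginals supp w = planMasses μ supp := by
  rw [IsPlan, planMasses, isProbabilityMeasure_iff, weightedDirac_univ hw, ENNReal.ofReal_eq_one,
    Prod.ext_iff, funext_iff]
  refine and_congr Iff.rfl (forall_congr' fun i => ?_)
  rw [map_eval_weightedDirac hw]
  conv_lhs => rw [eq_weightedDirac_measureReal (μ i) (hsupp i)]
  exact weightedDirac_inj (fun y => sum_nonneg fun g _ => hw g) fun _ => measureReal_nonneg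

lemma IsPlan.measure_compl_piFinset {π : Measure (Fin N → Pt d)} (hπ : IsPlan μ π)
    (hsupp : ∀ i, μ i (supp i : Set (Pt d))ᶜ = 0) :
    π (Fintype.piFinset supp : Set (Fin N → Pt d))ᶜ = 0 := by
  have : (Fintype.piFinset supp : Set (Fin N → Pt d))ᶜ =
      ⋃ i, (fun x => x i) ⁻¹' (supp i : Set (Pt d))ᶜ := by
    ext x
    simp [not_forall]
  rw [this]
  refine measure_iUnion_null fun i => ?_
  rw [← Measure.map_apply (measurable_pi_apply i) (Finset.measurableSet _).compl, hπ.2 i]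
  exact hsupp i

lemma IsPlan.eq_weightedDirac {π : Measure (Fin N → Pt d)} (hπ : IsPlan μ π)
    (hsupp : ∀ i, μ i (supp i : Set (Pt d))ᶜ = 0) :
    π = weightedDirac fun g : Fintype.piFinset supp => π.real {(g : Fin N → Pt d)} :=
  have := hπ.1
  eq_weightedDirac_measureReal π (hπ.measure_compl_piFinset hsupp)

lemma IsPlan.massMarginals_measureReal [∀ i, IsFiniteMeasure (μ i)]
    {π : Measure (Fin N → Pt d)} (hπ : IsPlan μ π) (hsupp : ∀ i, μ i (supp i : Set (Pt d))ᶜ = 0) :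
    massMarginals supp (fun g => π.real {(g : Fin N → Pt d)}) = planMasses μ supp :=
  (isPlan_weightedDirac_iff hsupp fun _ => measureReal_nonneg).1 (hπ.eq_weightedDirac hsupp ▸ hπ)

lemma isPlan_pi (μ : Fin N → Measure (Pt d)) [∀ i, IsProbabilityMeasure (μ i)] :
    IsPlan μ (Measure.pi μ) :=
  ⟨inferInstance, fun i => by
    rw [show (fun x : Fin N → Pt d => x i) = Function.eval i from rfl, Measure.pi_map_eval]
    simp⟩

lemma MOT_weightedDirac (l : Fin N → ℝ) {s : Finset (Fin N → Pt d)} {w : s → ℝ} (hw : 0 ≤ w) :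
    MOT l (weightedDirac w) =
      ENNReal.ofReal (w ⬝ᵥ fun x => (MOT l (Measure.dirac (x : Fin N → Pt d))).toReal) := by
  simp only [MOT, lintegral_dirac]
  exact lintegral_weightedDirac hw fun x =>
    ENNReal.sum_ne_top.2 fun s _ => ENNReal.sum_ne_top.2 fun t _ => by split_ifs <;> simp

end Plans

theorem stmt5_general {d N : ℕ} (μ : Fin N → Measure (Pt d)) (supp : Fin N → Finset (Pt d))
    (hμ : ∀ i, IsProbabilityMeasure (μ i) ∧ μ i ((supp i : Set (Pt d))ᶜ) = 0
      ∧ ∀ x ∈ supp i, μ i {x} ≠ 0)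
    (l : Fin N → ℝ) :
    ∃ pihat : Measure (Fin N → Pt d), IsPlan μ pihat ∧
      (∀ π, IsPlan μ π → MOT l pihat ≤ MOT l π) ∧
      ∃ s : Finset (Fin N → Pt d), pihat ((s : Set (Fin N → Pt d))ᶜ) = 0 ∧
        msupport pihat ⊆ (s : Set (Fin N → Pt d)) ∧
        s.card + N ≤ (∑ i, (supp i).card) + 1 := by
  classical
  have (i : Fin N) : IsProbabilityMeasure (μ i) := (hμ i).1
  have hsupp (i : Fin N) : μ i (supp i : Set (Pt d))ᶜ = 0 := (hμ i).2.1
  have hne (i : Fin N) : (supp i).Nonempty := by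
    by_contra h
    simpa [not_nonempty_iff_eq_empty.1 h] using hsupp i
  obtain ⟨w, hw, hmin, hcard⟩ := exists_isMinOn_card_support_le
    (fun g : Fintype.piFinset supp => (MOT l (Measure.dirac (g : Fin N → Pt d))).toReal)
    ⟨_, fun _ => measureReal_nonneg, (isPlan_pi μ).massMarginals_measureReal hsupp⟩
    (isCompact_feasibleSet_massMarginals supp _)
  let S := ({g | w g ≠ 0} : Finset _).map (Function.Embedding.subtype _)
  have hS : weightedDirac w (S : Set (Fin N → Pt d))ᶜ = 0 :=
    weightedDirac_compl_eq_zero fun g hg => by simp [S, hg]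
  refine ⟨weightedDirac w, (isPlan_weightedDirac_iff hsupp hw.1).2 hw.2, fun π hπ => ?_, S, hS,
    msupport_subset_of_measure_compl_eq_zero hS, ?_⟩
  · rw [hπ.eq_weightedDirac hsupp, MOT_weightedDirac l hw.1,
      MOT_weightedDirac l fun _ => measureReal_nonneg]
    exact ENNReal.ofReal_le_ofReal
      (isMinOn_iff.1 hmin _ ⟨fun _ => measureReal_nonneg, hπ.massMarginals_measureReal hsupp⟩)
  · have := finrank_range_massMarginals_add_card_le supp hne
    simp only [S, card_map, Fintype.card_fin] at this ⊢
    omega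

/-- There exists an optimal MOT plan whose support has cardinality at most
`Σ_i n_i − N + 1`, where `n_i` is the number of support points of `μ i`
(stated as `card + N ≤ Σ_i n_i + 1` to avoid truncated subtraction). -/
theorem stmt5 {d N : ℕ} (μ : Fin N → Measure (Pt d)) (supp : Fin N → Finset (Pt d))
    (hμ : ∀ i, IsProbabilityMeasure (μ i) ∧ μ i ((supp i : Set (Pt d))ᶜ) = 0
      ∧ ∀ x ∈ supp i, μ i {x} ≠ 0)
    (l : Fin N → ℝ) (hl : InSimplex l) :
    ∃ pihat : Measure (Fin N → Pt d), IsPlan μ pihat ∧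
      (∀ π, IsPlan μ π → MOT l pihat ≤ MOT l π) ∧
      ∃ s : Finset (Fin N → Pt d), pihat ((s : Set (Fin N → Pt d))ᶜ) = 0 ∧
        msupport pihat ⊆ (s : Set (Fin N → Pt d)) ∧
        s.card + N ≤ (∑ i, (supp i).card) + 1 :=
  stmt5_general μ supp hμ l
end
end

section
/- Let ν̂ be an optimal barycenter, i.e. a minimizer of Ψ over probability measures on ℝ^d. Then for every finitely supported probability measure ν̃ on ℝ^d it holds that Ψ(ν̃) ≤ Ψ(ν̂) + W₂²(ν̃, ν̂). -/
open MeasureTheory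
open scoped ENNReal

noncomputable section

/-!
Take near-optimal couplings of `μᵢ` and `ν̂`, and of `ν̃` and `ν̂`, and disintegrate them along
`ν̂`: as `μᵢ` and `ν̃` are finitely supported, this gives conditional weights `fᵢ(x, y)` and
`g(z, y)` of `x` (resp. `z`) given `y`. Gluing along `y` couples `μᵢ` with `ν̃`, so
`Ψ(ν̃) ≤ ∫ ∑ᵢ λᵢ ∑ₓ fᵢ(x, y) ∑_z g(z, y) |x - z|² dν̂(y)`.
Pushing `ν̂` forward by the conditional barycenter `M y = ∑ᵢ λᵢ ∑ₓ fᵢ(x, y) x` gives a competitor,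
and the bias–variance identity `∑ᵢ λᵢ ∑ₓ fᵢ |x - y|² = ∑ᵢ λᵢ ∑ₓ fᵢ |x - M y|² + |M y - y|²`
together with the optimality of `ν̂` shows that `∫ |M y - y|² dν̂` is at most the slack `ε` of the
couplings. Splitting `|x - z|²` through `M y` and `y` with
`|a + b|² ≤ (1 + θ⁻¹)|a|² + (1 + θ)|b|²` then gives
`Ψ(ν̃) ≤ Ψ(ν̂) + ε + θ⁻¹ε + (1 + θ)(W₂²(ν̃, ν̂) + ε)`; let `ε → 0`, then `θ → 0`.
-/

open Filter Topology

namespace MeasureTheory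

variable {α β γ ι κ : Type*} [MeasurableSpace α] [MeasurableSpace β] [MeasurableSpace γ]

theorem withDensity_finsetSum {ν : Measure α} {s : Finset ι} {w : ι → α → ℝ≥0∞}
    (hw : ∀ a, Measurable (w a)) :
    ν.withDensity (fun y => ∑ a ∈ s, w a y) = ∑ a ∈ s, ν.withDensity (w a) := by
  ext A hA
  rw [Measure.finsetSum_apply, withDensity_apply _ hA, lintegral_finsetSum _ fun a _ => hw a]
  simp only [withDensity_apply _ hA]

/-- The law of `F a y` when `y ∼ ν` and then `a ∈ s` is drawn with probability `w a y`. -/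
def mixture (ν : Measure α) (s : Finset ι) (w : ι → α → ℝ≥0∞) (F : ι → α → β) : Measure β :=
  ∑ a ∈ s, (ν.withDensity (w a)).map (F a)

section Mixture

variable {ν : Measure α} {s : Finset ι} {w : ι → α → ℝ≥0∞} {F : ι → α → β}

theorem lintegral_mixture (hw : ∀ a, Measurable (w a)) (hF : ∀ a, Measurable (F a))
    {c : β → ℝ≥0∞} (hc : Measurable c) :
    ∫⁻ b, c b ∂mixture ν s w F = ∫⁻ y, ∑ a ∈ s, w a y * c (F a y) ∂ν := by
  rw [mixture, lintegral_finsetSum_measure,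
    lintegral_finsetSum (f := fun a y => w a y * c (F a y)) _
      fun a _ => (hw a).mul (hc.comp (hF a))]
  refine Finset.sum_congr rfl fun a _ => ?_
  rw [lintegral_map hc (hF a)]
  exact lintegral_withDensity_eq_lintegral_mul _ (hw a) (hc.comp (hF a))

theorem lintegral_ofReal_mixture {w : ι → α → ℝ} (hw : ∀ a, Measurable (w a))
    (hw0 : ∀ a y, 0 ≤ w a y) (hF : ∀ a, Measurable (F a)) {c : β → ℝ} (hc : Measurable c)
    (hc0 : ∀ b, 0 ≤ c b) :
    ∫⁻ b, ENNReal.ofReal (c b) ∂mixture ν s (fun a y => ENNReal.ofReal (w a y)) F =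
      ∫⁻ y, ENNReal.ofReal (∑ a ∈ s, w a y * c (F a y)) ∂ν := by
  rw [lintegral_mixture (fun a => (hw a).ennreal_ofReal) hF hc.ennreal_ofReal]
  refine lintegral_congr fun y => ?_
  rw [ENNReal.ofReal_sum_of_nonneg fun a _ => mul_nonneg (hw0 a y) (hc0 _)]
  simp_rw [ENNReal.ofReal_mul (hw0 _ y)]

theorem map_mixture (hF : ∀ a, Measurable (F a)) {φ : β → γ} (hφ : Measurable φ) :
    (mixture ν s w F).map φ = mixture ν s w fun a => φ ∘ F a := by
  rw [mixture, Measure.map_finset_sum hφ.aemeasurable]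
  exact Finset.sum_congr rfl fun a _ => Measure.map_map hφ (hF a)

theorem mixture_const (b : ι → β) :
    mixture ν s w (fun a _ => b a) = ∑ a ∈ s, (∫⁻ y, w a y ∂ν) • Measure.dirac (b a) := by
  simp only [mixture, Measure.map_const, withDensity_apply _ MeasurableSet.univ,
    Measure.restrict_univ]

theorem mixture_eq_map_withDensity (hw : ∀ a, Measurable (w a)) {T : α → β} (hT : Measurable T) :
    mixture ν s w (fun _ => T) = (ν.withDensity fun y => ∑ a ∈ s, w a y).map T := by
  rw [mixture, withDensity_finsetSum hw, Measure.map_finset_sum hT.aemeasurable]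

theorem mixture_product_fst {t : Finset κ} {v : κ → α → ℝ≥0∞} (hw : ∀ a, Measurable (w a))
    (hv : ∀ b, Measurable (v b)) (hv1 : ∀ᵐ y ∂ν, ∑ b ∈ t, v b y = 1)
    (hF : ∀ a, Measurable (F a)) :
    mixture ν (s ×ˢ t) (fun p y => w p.1 y * v p.2 y) (fun p => F p.1) = mixture ν s w F := by
  rw [mixture, Finset.sum_product]
  refine Finset.sum_congr rfl fun a _ => ?_
  rw [← Measure.map_finset_sum (hF a).aemeasurable,
    ← withDensity_finsetSum (w := fun b y => w a y * v b y) fun b => (hw a).mul (hv b)]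
  congr 1
  refine withDensity_congr_ae ?_
  filter_upwards [hv1] with y hy
  rw [← Finset.mul_sum, hy, mul_one]

theorem mixture_product_snd {t : Finset κ} {v : κ → α → ℝ≥0∞} {G : κ → α → β}
    (hw : ∀ a, Measurable (w a)) (hv : ∀ b, Measurable (v b)) (hw1 : ∀ᵐ y ∂ν, ∑ a ∈ s, w a y = 1)
    (hG : ∀ b, Measurable (G b)) :
    mixture ν (s ×ˢ t) (fun p y => w p.1 y * v p.2 y) (fun p => G p.2) = mixture ν t v G := by
  rw [mixture, Finset.sum_product_right]
  refine Finset.sum_congr rfl fun b _ => ?_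
  rw [← Measure.map_finset_sum (hG b).aemeasurable,
    ← withDensity_finsetSum (w := fun a y => w a y * v b y) fun a => (hw a).mul (hv b)]
  congr 1
  refine withDensity_congr_ae ?_
  filter_upwards [hw1] with y hy
  rw [← Finset.sum_mul, hy, one_mul]

end Mixture

theorem isCoupling_of_map_eq {ρ η : Measure α} {π : Measure (α × α)} [IsProbabilityMeasure ρ]
    (hfst : π.map Prod.fst = ρ) (hsnd : π.map Prod.snd = η) : IsCoupling ρ η π := by
  refine ⟨?_, hfst, hsnd⟩
  subst hfst
  exact Measure.isProbabilityMeasure_of_map Prod.fst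

theorem IsCoupling.isProbabilityMeasure_right {ρ η : Measure α} {π : Measure (α × α)}
    (hπ : IsCoupling ρ η π) : IsProbabilityMeasure η := by
  obtain ⟨_, -, rfl⟩ := hπ
  exact Measure.isProbabilityMeasure_map measurable_snd.aemeasurable

/-- `w x y` is a version of the conditional probability that the first coordinate of a coupling
of `ρ` and `ν` equals `x`, given that the second one equals `y`. -/
structure IsCondWeights (ν ρ : Measure α) (s : Finset α) (w : α → α → ℝ) : Prop where
  measurable : ∀ x, Measurable (w x)
  nonneg : ∀ x y, 0 ≤ w x y
  sum_eq_one : ∀ᵐ y ∂ν, ∑ x ∈ s, w x y = 1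
  lintegral_eq : ∀ x, ∫⁻ y, ENNReal.ofReal (w x y) ∂ν = ρ {x}
  ae_mem : ∀ᵐ x ∂ρ, x ∈ s

namespace IsCondWeights

variable {ν ρ η : Measure α} {s t : Finset α} {w v : α → α → ℝ}

theorem sum_mul_nonneg (hw : IsCondWeights ν ρ s w) {c : α → ℝ} (hc : ∀ x, 0 ≤ c x) (y : α) :
    0 ≤ ∑ x ∈ s, w x y * c x :=
  Finset.sum_nonneg fun x _ => mul_nonneg (hw.nonneg x y) (hc x)

theorem measurable_ofReal (hw : IsCondWeights ν ρ s w) (x : α) :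
    Measurable fun y => ENNReal.ofReal (w x y) :=
  (hw.measurable x).ennreal_ofReal

theorem sum_ofReal_eq_one (hw : IsCondWeights ν ρ s w) :
    ∀ᵐ y ∂ν, ∑ x ∈ s, ENNReal.ofReal (w x y) = 1 := by
  filter_upwards [hw.sum_eq_one] with y hy
  rw [← ENNReal.ofReal_sum_of_nonneg fun x _ => hw.nonneg x y, hy, ENNReal.ofReal_one]

theorem mixture_const_eq [MeasurableSingletonClass α] (hw : IsCondWeights ν ρ s w) :
    mixture ν s (fun x y => ENNReal.ofReal (w x y)) (fun x _ => x) = ρ := by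
  rw [mixture_const, Measure.ae_mem_finset_iff.mp hw.ae_mem]
  simp only [hw.lintegral_eq]

theorem mixture_eq_map (hw : IsCondWeights ν ρ s w) {T : α → β} (hT : Measurable T) :
    mixture ν s (fun x y => ENNReal.ofReal (w x y)) (fun _ => T) = ν.map T := by
  rw [mixture_eq_map_withDensity hw.measurable_ofReal hT,
    withDensity_congr_ae hw.sum_ofReal_eq_one, ← Pi.one_def, withDensity_one]

theorem isCoupling_mixture_map [MeasurableSingletonClass α] (hw : IsCondWeights ν ρ s w)
    [IsProbabilityMeasure ρ] {T : α → α} (hT : Measurable T) :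
    IsCoupling ρ (ν.map T)
      (mixture ν s (fun x y => ENNReal.ofReal (w x y)) fun x y => (x, T y)) :=
  isCoupling_of_map_eq
    ((map_mixture (fun _ => measurable_const.prodMk hT) measurable_fst).trans hw.mixture_const_eq)
    ((map_mixture (fun _ => measurable_const.prodMk hT) measurable_snd).trans
      (hw.mixture_eq_map hT))

theorem isCoupling_mixture_product [MeasurableSingletonClass α] (hw : IsCondWeights ν ρ s w)
    (hv : IsCondWeights ν η t v) [IsProbabilityMeasure ρ] :
    IsCoupling ρ η
      (mixture ν (s ×ˢ t) (fun p y => ENNReal.ofReal (w p.1 y * v p.2 y)) fun p _ => p) := by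
  simp_rw [ENNReal.ofReal_mul (hw.nonneg _ _)]
  refine isCoupling_of_map_eq ?_ ?_
  · rw [map_mixture (fun _ => measurable_const) measurable_fst]
    exact (mixture_product_fst hw.measurable_ofReal hv.measurable_ofReal hv.sum_ofReal_eq_one
      fun _ => measurable_const).trans hw.mixture_const_eq
  · rw [map_mixture (fun _ => measurable_const) measurable_snd]
    exact (mixture_product_snd hw.measurable_ofReal hv.measurable_ofReal hw.sum_ofReal_eq_one
      fun _ => measurable_const).trans hv.mixture_const_eq

end IsCondWeights

section Disintegration

variable [MeasurableSingletonClass α] {ρ ν : Measure α} {π : Measure (α × α)} {s : Finset α}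

theorem IsCoupling.eq_sum_map_slice (hπ : IsCoupling ρ ν π) (hs : ∀ᵐ x ∂ρ, x ∈ s) :
    π = ∑ x ∈ s, ((π.restrict (Prod.fst ⁻¹' {x})).map Prod.snd).map fun y => (x, y) := by
  have hslice : ∀ x, MeasurableSet (Prod.fst ⁻¹' {x} : Set (α × α)) :=
    fun x => measurable_fst (measurableSet_singleton x)
  have hπs : ∀ᵐ p ∂π, p ∈ ⋃ x ∈ s, Prod.fst ⁻¹' {x} := by
    have := ae_of_ae_map measurable_fst.aemeasurable (hπ.2.1 ▸ hs)
    filter_upwards [this] with p hp using by simpa using hp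
  conv_lhs => rw [← Measure.restrict_eq_self_of_ae_mem hπs, Measure.restrict_biUnion_finset
      (fun x _ y _ hxy => Set.disjoint_left.mpr fun p hx hy => hxy (hx.symm.trans hy)) hslice,
    Measure.sum_coe_finset s fun x => π.restrict (Prod.fst ⁻¹' {x})]
  refine Finset.sum_congr rfl fun x _ => ?_
  rw [Measure.map_map measurable_prodMk_left measurable_snd]
  conv_lhs => rw [← Measure.map_id (μ := π.restrict _)]
  refine Measure.map_congr ?_
  filter_upwards [ae_restrict_mem (hslice x)] with p (hp : p.1 = x)
  simp [← hp]

theorem IsCoupling.exists_isCondWeights (hπ : IsCoupling ρ ν π) (hs : ∀ᵐ x ∂ρ, x ∈ s) :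
    ∃ w, IsCondWeights ν ρ s w ∧
      π = mixture ν s (fun x y => ENNReal.ofReal (w x y)) fun x y => (x, y) := by
  have := hπ.isProbabilityMeasure_right
  set slice : α → Measure α := fun x => (π.restrict (Prod.fst ⁻¹' {x})).map Prod.snd
  have hdens : ∀ x, ν.withDensity (fun y => ENNReal.ofReal ((slice x).rnDeriv ν y).toReal) =
      slice x := by
    intro x
    have hle : slice x ≤ ν := hπ.2.2 ▸ Measure.map_mono Measure.restrict_le_self measurable_snd
    have := isFiniteMeasure_of_le ν hle
    rw [withDensity_congr_ae ((Measure.rnDeriv_lt_top _ _).mono fun y hy =>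
        ENNReal.ofReal_toReal hy.ne),
      Measure.withDensity_rnDeriv_eq _ _ (Measure.absolutelyContinuous_of_le hle)]
  set w : α → α → ℝ := fun x y => ((slice x).rnDeriv ν y).toReal
  have hw : ∀ x, Measurable (w x) := fun x => (Measure.measurable_rnDeriv _ _).ennreal_toReal
  have hwE : ∀ x, Measurable fun y => ENNReal.ofReal (w x y) := fun x => (hw x).ennreal_ofReal
  have hπw : π = mixture ν s (fun x y => ENNReal.ofReal (w x y)) fun x y => (x, y) := by
    rw [mixture]
    simp_rw [w, hdens]
    exact hπ.eq_sum_map_slice hs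
  refine ⟨w, ⟨hw, fun _ _ => ENNReal.toReal_nonneg, ?_, fun x => ?_, hs⟩, hπw⟩
  · -- the slices add up to the second marginal `ν`, so their densities add up to `1`
    have h : ν.withDensity (fun y => ∑ x ∈ s, ENNReal.ofReal (w x y)) = ν.withDensity 1 := by
      rw [withDensity_one]
      calc _ = (ν.withDensity fun y => ∑ x ∈ s, ENNReal.ofReal (w x y)).map id :=
            Measure.map_id.symm
        _ = (mixture ν s (fun x y => ENNReal.ofReal (w x y)) fun x y => (x, y)).map Prod.snd :=
          ((map_mixture (F := fun x y => (x, y)) (fun _ => measurable_prodMk_left)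
            measurable_snd).trans (mixture_eq_map_withDensity (T := id) hwE measurable_id)).symm
        _ = ν := by rw [← hπw, hπ.2.2]
    filter_upwards [(withDensity_eq_iff_of_sigmaFinite (by fun_prop) aemeasurable_one).mp h]
      with y hy
    rw [← ENNReal.ofReal_sum_of_nonneg fun _ _ => ENNReal.toReal_nonneg] at hy
    exact ENNReal.ofReal_eq_one.mp hy
  · rw [← setLIntegral_univ, ← withDensity_apply _ .univ, hdens,
      Measure.map_apply measurable_snd .univ, Set.preimage_univ, Measure.restrict_apply_univ,
      ← Measure.map_apply measurable_fst (measurableSet_singleton x), hπ.2.1]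

end Disintegration

theorem lintegral_ofReal_sum_mul {ν : Measure α} (s : Finset ι) {l : ι → ℝ} (hl : ∀ i, 0 ≤ l i)
    {h : ι → α → ℝ} (hh : ∀ i, Measurable (h i)) (hh0 : ∀ i y, 0 ≤ h i y) :
    ∫⁻ y, ENNReal.ofReal (∑ i ∈ s, l i * h i y) ∂ν =
      ∑ i ∈ s, ENNReal.ofReal (l i) * ∫⁻ y, ENNReal.ofReal (h i y) ∂ν := by
  simp_rw [ENNReal.ofReal_sum_of_nonneg fun i _ => mul_nonneg (hl i) (hh0 i _),
    ENNReal.ofReal_mul (hl _)]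
  rw [lintegral_finsetSum _ fun i _ => ((hh i).ennreal_ofReal.const_mul _)]
  simp_rw [lintegral_const_mul _ (hh _).ennreal_ofReal]

end MeasureTheory

theorem ENNReal.le_add_of_forall_pos_le {x a b : ℝ≥0∞} (hb : b ≠ ∞)
    (h : ∀ ε θ : ℝ, 0 < ε → 0 < θ → x ≤ a + ENNReal.ofReal ε +
      ENNReal.ofReal θ⁻¹ * ENNReal.ofReal ε + ENNReal.ofReal (1 + θ) * (b + ENNReal.ofReal ε)) :
    x ≤ a + b := by
  have hθ : ∀ θ : ℝ, 0 < θ → x ≤ a + ENNReal.ofReal (1 + θ) * b := by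
    intro θ hθ
    have h0 : Tendsto ENNReal.ofReal (𝓝[>] 0) (𝓝 0) := by
      simpa using (ENNReal.continuous_ofReal.tendsto 0).mono_left nhdsWithin_le_nhds
    have hlim : Tendsto (fun ε => a + ENNReal.ofReal ε + ENNReal.ofReal θ⁻¹ * ENNReal.ofReal ε +
        ENNReal.ofReal (1 + θ) * (b + ENNReal.ofReal ε)) (𝓝[>] 0)
        (𝓝 (a + 0 + ENNReal.ofReal θ⁻¹ * 0 + ENNReal.ofReal (1 + θ) * (b + 0))) :=
      ((tendsto_const_nhds.add h0).add
        (ENNReal.Tendsto.const_mul h0 (Or.inr ENNReal.ofReal_ne_top))).add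
        (ENNReal.Tendsto.const_mul (tendsto_const_nhds.add h0) (Or.inr ENNReal.ofReal_ne_top))
    simp only [add_zero, mul_zero] at hlim
    exact ge_of_tendsto hlim (eventually_nhdsWithin_of_forall fun ε hε => h ε θ hε hθ)
  have h1 : Tendsto (fun θ : ℝ => ENNReal.ofReal (1 + θ)) (𝓝[>] 0) (𝓝 1) := by
    have : Tendsto (fun θ : ℝ => ENNReal.ofReal (1 + θ)) (𝓝 0) (𝓝 (ENNReal.ofReal (1 + 0))) :=
      (ENNReal.continuous_ofReal.comp (continuous_const_add 1)).tendsto 0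
    rw [add_zero, ENNReal.ofReal_one] at this
    exact this.mono_left nhdsWithin_le_nhds
  have hlim := (ENNReal.Tendsto.mul_const h1 (Or.inr hb)).const_add a
  rw [one_mul] at hlim
  exact ge_of_tendsto hlim (eventually_nhdsWithin_of_forall hθ)

theorem norm_add_sq_le_mul {E : Type*} [SeminormedAddCommGroup E] (a b : E) {θ : ℝ} (hθ : 0 < θ) :
    ‖a + b‖ ^ 2 ≤ (1 + θ⁻¹) * ‖a‖ ^ 2 + (1 + θ) * ‖b‖ ^ 2 := by
  have hamgm : 2 * ‖a‖ * ‖b‖ ≤ θ⁻¹ * ‖a‖ ^ 2 + θ * ‖b‖ ^ 2 := by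
    have h : 0 ≤ θ⁻¹ * (‖a‖ - θ * ‖b‖) ^ 2 := by positivity
    have : θ⁻¹ * θ = 1 := inv_mul_cancel₀ hθ.ne'
    nlinarith
  nlinarith [norm_add_le a b, norm_nonneg (a + b), norm_nonneg a, norm_nonneg b]

section Variance

variable {ι E : Type*} [NormedAddCommGroup E] [InnerProductSpace ℝ E]

theorem sum_mul_norm_sub_sq_eq (s : Finset ι) (w : ι → ℝ) (p : ι → E) (hw : ∑ i ∈ s, w i = 1)
    (c : E) :
    ∑ i ∈ s, w i * ‖p i - c‖ ^ 2 =
      ∑ i ∈ s, w i * ‖p i - ∑ j ∈ s, w j • p j‖ ^ 2 + ‖∑ j ∈ s, w j • p j - c‖ ^ 2 := by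
  set m := ∑ j ∈ s, w j • p j with hm
  have hcentered : ∑ i ∈ s, w i * inner ℝ (p i - m) (m - c) = 0 := by
    simp_rw [← real_inner_smul_left]
    rw [← sum_inner]
    simp_rw [smul_sub, Finset.sum_sub_distrib, ← Finset.sum_smul, hw, one_smul, ← hm, sub_self,
      inner_zero_left]
  have hsplit : ∀ i, ‖p i - c‖ ^ 2 = ‖p i - m‖ ^ 2 + 2 * inner ℝ (p i - m) (m - c) + ‖m - c‖ ^ 2 :=
    fun i => by rw [← norm_add_sq_real, sub_add_sub_cancel]
  have hcross : ∑ i ∈ s, w i * (2 * inner ℝ (p i - m) (m - c)) = 0 := by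
    simp_rw [mul_left_comm (w _) (2 : ℝ), ← Finset.mul_sum, hcentered, mul_zero]
  simp_rw [hsplit, mul_add, Finset.sum_add_distrib, hcross, ← Finset.sum_mul, hw, one_mul, add_zero]

variable [Fintype ι]

theorem sum_mul_sum_mul_norm_sub_sq_eq (l : ι → ℝ) (s : ι → Finset E) (w : ι → E → ℝ)
    (hl : ∑ i, l i = 1) (hw : ∀ i, ∑ x ∈ s i, w i x = 1) (c : E) :
    ∑ i, l i * ∑ x ∈ s i, w i x * ‖x - c‖ ^ 2 =
      ∑ i, l i * ∑ x ∈ s i, w i x * ‖x - ∑ j, l j • ∑ x ∈ s j, w j x • x‖ ^ 2 +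
        ‖∑ j, l j • ∑ x ∈ s j, w j x • x - c‖ ^ 2 := by
  set m := ∑ j, l j • ∑ x ∈ s j, w j x • x
  have h : ∀ c, ∑ i, l i * ∑ x ∈ s i, w i x * ‖x - c‖ ^ 2 =
      ∑ i, l i * ∑ x ∈ s i, w i x * ‖x - ∑ y ∈ s i, w i y • y‖ ^ 2 +
        (∑ i, l i * ‖∑ y ∈ s i, w i y • y - m‖ ^ 2 + ‖m - c‖ ^ 2) := fun c => by
    have hinner := fun i => sum_mul_norm_sub_sq_eq (s i) (w i) (fun x => x) (hw i) c
    beta_reduce at hinner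
    simp_rw [hinner, mul_add, Finset.sum_add_distrib]
    rw [sum_mul_norm_sub_sq_eq Finset.univ l _ hl]
  rw [h c, h m, sub_self, norm_zero]
  ring

theorem sum_mul_sum_mul_sum_norm_sub_sq_le (l : ι → ℝ) (s : ι → Finset E) (w : ι → E → ℝ)
    (hl : ∑ i, l i = 1) (hw : ∀ i, ∑ x ∈ s i, w i x = 1) (t : Finset E) (q : E → ℝ)
    (hq0 : ∀ z, 0 ≤ q z) (hq : ∑ z ∈ t, q z = 1) (y : E) {θ : ℝ} (hθ : 0 < θ) :
    ∑ i, l i * ∑ x ∈ s i, w i x * ∑ z ∈ t, q z * ‖x - z‖ ^ 2 ≤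
      ∑ i, l i * ∑ x ∈ s i, w i x * ‖x - y‖ ^ 2 +
        θ⁻¹ * ‖∑ j, l j • ∑ x ∈ s j, w j x • x - y‖ ^ 2 +
          (1 + θ) * ∑ z ∈ t, q z * ‖z - y‖ ^ 2 := by
  have hdecomp := sum_mul_sum_mul_norm_sub_sq_eq l s w hl hw
  set m := ∑ j, l j • ∑ x ∈ s j, w j x • x
  set A := ∑ i, l i * ∑ x ∈ s i, w i x * ‖x - m‖ ^ 2
  have hswap : ∑ i, l i * ∑ x ∈ s i, w i x * ∑ z ∈ t, q z * ‖x - z‖ ^ 2 =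
      ∑ z ∈ t, q z * ∑ i, l i * ∑ x ∈ s i, w i x * ‖x - z‖ ^ 2 := by
    simp_rw [Finset.mul_sum]
    rw [Finset.sum_comm]
    refine Finset.sum_congr rfl fun z _ => ?_
    rw [Finset.sum_comm]
    exact Finset.sum_congr rfl fun i _ => Finset.sum_congr rfl fun x _ => by ring
  have htriangle : ∀ z, ‖m - z‖ ^ 2 ≤ (1 + θ⁻¹) * ‖m - y‖ ^ 2 + (1 + θ) * ‖z - y‖ ^ 2 := fun z => by
    simpa [norm_sub_rev y z] using norm_add_sq_le_mul (m - y) (y - z) hθ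
  calc _ = ∑ z ∈ t, q z * (A + ‖m - z‖ ^ 2) := by
        rw [hswap]
        exact Finset.sum_congr rfl fun z _ => by rw [hdecomp]
    _ ≤ ∑ z ∈ t, q z * (A + ((1 + θ⁻¹) * ‖m - y‖ ^ 2 + (1 + θ) * ‖z - y‖ ^ 2)) :=
      Finset.sum_le_sum fun z _ => mul_le_mul_of_nonneg_left (by linarith [htriangle z]) (hq0 z)
    _ = A + ‖m - y‖ ^ 2 + θ⁻¹ * ‖m - y‖ ^ 2 + (1 + θ) * ∑ z ∈ t, q z * ‖z - y‖ ^ 2 := by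
      have hsplit : ∀ z, q z * (A + ((1 + θ⁻¹) * ‖m - y‖ ^ 2 + (1 + θ) * ‖z - y‖ ^ 2)) =
          q z * (A + (1 + θ⁻¹) * ‖m - y‖ ^ 2) + (1 + θ) * (q z * ‖z - y‖ ^ 2) := fun z => by ring
      simp_rw [hsplit, Finset.sum_add_distrib, ← Finset.sum_mul, hq, ← Finset.mul_sum]
      ring
    _ = _ := by rw [hdecomp y]

end Variance

open MeasureTheory

theorem W2sq_le_lintegral {d : ℕ} {ρ η : Measure (Pt d)} {π : Measure (Pt d × Pt d)}
    (hπ : IsCoupling ρ η π) : W2sq ρ η ≤ ∫⁻ p, ENNReal.ofReal (‖p.1 - p.2‖ ^ 2) ∂π :=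
  sInf_le ⟨π, hπ, rfl⟩

theorem exists_isCondWeights_lintegral_lt {d : ℕ} {ρ ν : Measure (Pt d)} {s : Finset (Pt d)}
    (hs : ∀ᵐ x ∂ρ, x ∈ s) {c : ℝ≥0∞} (h : W2sq ρ ν < c) :
    ∃ w, IsCondWeights ν ρ s w ∧
      ∫⁻ y, ENNReal.ofReal (∑ x ∈ s, w x y * ‖x - y‖ ^ 2) ∂ν < c := by
  obtain ⟨_, ⟨γ, hγ, rfl⟩, hlt⟩ := sInf_lt_iff.mp h
  obtain ⟨w, hw, rfl⟩ := hγ.exists_isCondWeights hs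
  refine ⟨w, hw, ?_⟩
  rwa [lintegral_ofReal_mixture hw.measurable hw.nonneg (fun _ => measurable_prodMk_left)
    (c := fun p => ‖p.1 - p.2‖ ^ 2) (by fun_prop) fun _ => sq_nonneg _] at hlt

section Barycenter

variable {d N : ℕ} {μ : Fin N → Measure (Pt d)} {l : Fin N → ℝ} {ν η : Measure (Pt d)}
  {S : Fin N → Finset (Pt d)} {f : Fin N → Pt d → Pt d → ℝ}

def condBarycenter (l : Fin N → ℝ) (S : Fin N → Finset (Pt d)) (f : Fin N → Pt d → Pt d → ℝ)
    (y : Pt d) : Pt d :=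
  ∑ i, l i • ∑ x ∈ S i, f i x y • x

theorem measurable_condBarycenter (l : Fin N → ℝ) (S : Fin N → Finset (Pt d))
    (hf : ∀ i x, Measurable (f i x)) : Measurable (condBarycenter l S f) := by
  unfold condBarycenter
  fun_prop

theorem W2sq_ne_top_of_psi_ne_top (hl : ∀ i, 0 < l i) (h : Psi l μ ν ≠ ∞) (i : Fin N) :
    W2sq (μ i) ν ≠ ∞ := fun hi =>
  h (ENNReal.sum_eq_top.2 ⟨i, Finset.mem_univ i, by
    rw [hi, ENNReal.mul_top (ENNReal.ofReal_pos.2 (hl i)).ne']⟩)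

theorem psi_le_lintegral (hl : ∀ i, 0 ≤ l i) {π : Fin N → Measure (Pt d × Pt d)}
    (hπ : ∀ i, IsCoupling (μ i) η (π i)) {h : Fin N → Pt d → ℝ} (hh : ∀ i, Measurable (h i))
    (hh0 : ∀ i y, 0 ≤ h i y)
    (hcost : ∀ i, ∫⁻ p, ENNReal.ofReal (‖p.1 - p.2‖ ^ 2) ∂π i = ∫⁻ y, ENNReal.ofReal (h i y) ∂ν) :
    Psi l μ η ≤ ∫⁻ y, ENNReal.ofReal (∑ i, l i * h i y) ∂ν := by
  rw [lintegral_ofReal_sum_mul _ hl hh hh0, Psi]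
  gcongr with i
  exact hcost i ▸ W2sq_le_lintegral (hπ i)

theorem lintegral_condVariance_add_bias (hl : InSimplex l)
    (hf : ∀ i, IsCondWeights ν (μ i) (S i) (f i)) :
    ∫⁻ y, ENNReal.ofReal
        (∑ i, l i * ∑ x ∈ S i, f i x y * ‖x - condBarycenter l S f y‖ ^ 2) ∂ν +
      ∫⁻ y, ENNReal.ofReal (‖condBarycenter l S f y - y‖ ^ 2) ∂ν =
      ∫⁻ y, ENNReal.ofReal (∑ i, l i * ∑ x ∈ S i, f i x y * ‖x - y‖ ^ 2) ∂ν := by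
  have := fun i => (hf i).measurable
  have hM := measurable_condBarycenter l S fun i => (hf i).measurable
  rw [← lintegral_add_left (by fun_prop)]
  refine lintegral_congr_ae ?_
  filter_upwards [ae_all_iff.2 fun i => (hf i).sum_eq_one] with y hy
  rw [← ENNReal.ofReal_add (Finset.sum_nonneg fun i _ => mul_nonneg (hl.1 i).le
      ((hf i).sum_mul_nonneg (fun _ => sq_nonneg _) y)) (sq_nonneg _),
    sum_mul_sum_mul_norm_sub_sq_eq l S (fun i x => f i x y) hl.2 hy y]
  rfl

theorem lintegral_sum_mul_sum_mul_sum_le (hl : InSimplex l)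
    (hf : ∀ i, IsCondWeights ν (μ i) (S i) (f i)) {T : Finset (Pt d)} {g : Pt d → Pt d → ℝ}
    (hg : IsCondWeights ν η T g) {θ : ℝ} (hθ : 0 < θ) :
    ∫⁻ y, ENNReal.ofReal
        (∑ i, l i * ∑ x ∈ S i, f i x y * ∑ z ∈ T, g z y * ‖x - z‖ ^ 2) ∂ν ≤
      ∫⁻ y, ENNReal.ofReal (∑ i, l i * ∑ x ∈ S i, f i x y * ‖x - y‖ ^ 2) ∂ν +
        ENNReal.ofReal θ⁻¹ * ∫⁻ y, ENNReal.ofReal (‖condBarycenter l S f y - y‖ ^ 2) ∂ν +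
          ENNReal.ofReal (1 + θ) * ∫⁻ y, ENNReal.ofReal (∑ z ∈ T, g z y * ‖z - y‖ ^ 2) ∂ν := by
  have := fun i => (hf i).measurable
  have := hg.measurable
  have hM := measurable_condBarycenter l S fun i => (hf i).measurable
  rw [← lintegral_const_mul _ (by fun_prop), ← lintegral_const_mul _ (by fun_prop),
    ← lintegral_add_left (by fun_prop), ← lintegral_add_left (by fun_prop)]
  refine lintegral_mono_ae ?_
  filter_upwards [ae_all_iff.2 fun i => (hf i).sum_eq_one, hg.sum_eq_one] with y hf1 hg1
  rw [← ENNReal.ofReal_mul (inv_nonneg.2 hθ.le), ← ENNReal.ofReal_mul (by positivity)]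
  refine (ENNReal.ofReal_le_ofReal ?_).trans
    (ENNReal.ofReal_add_le.trans (add_le_add ENNReal.ofReal_add_le le_rfl))
  exact sum_mul_sum_mul_sum_norm_sub_sq_le l S (fun i x => f i x y) hl.2 hf1 T (fun z => g z y)
    (fun z => hg.nonneg z y) hg1 y hθ

variable [∀ i, IsProbabilityMeasure (μ i)]

theorem psi_map_condBarycenter_le (hl : ∀ i, 0 ≤ l i)
    (hf : ∀ i, IsCondWeights ν (μ i) (S i) (f i)) :
    Psi l μ (ν.map (condBarycenter l S f)) ≤
      ∫⁻ y, ENNReal.ofReal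
        (∑ i, l i * ∑ x ∈ S i, f i x y * ‖x - condBarycenter l S f y‖ ^ 2) ∂ν := by
  have := fun i => (hf i).measurable
  have hM := measurable_condBarycenter l S fun i => (hf i).measurable
  refine psi_le_lintegral (h := fun i y => ∑ x ∈ S i, f i x y * ‖x - condBarycenter l S f y‖ ^ 2)
    hl (fun i => (hf i).isCoupling_mixture_map hM) (fun i => by fun_prop)
    (fun i y => (hf i).sum_mul_nonneg (fun _ => sq_nonneg _) y) fun i => ?_
  exact lintegral_ofReal_mixture (hf i).measurable (hf i).nonneg
    (fun _ => measurable_const.prodMk hM) (by fun_prop) fun _ => sq_nonneg _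

theorem psi_le_lintegral_of_isCondWeights (hl : ∀ i, 0 ≤ l i)
    (hf : ∀ i, IsCondWeights ν (μ i) (S i) (f i)) {T : Finset (Pt d)} {g : Pt d → Pt d → ℝ}
    (hg : IsCondWeights ν η T g) :
    Psi l μ η ≤ ∫⁻ y, ENNReal.ofReal
      (∑ i, l i * ∑ x ∈ S i, f i x y * ∑ z ∈ T, g z y * ‖x - z‖ ^ 2) ∂ν := by
  have := fun i => (hf i).measurable
  have := hg.measurable
  refine psi_le_lintegral (h := fun i y => ∑ x ∈ S i, f i x y * ∑ z ∈ T, g z y * ‖x - z‖ ^ 2) hl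
    (fun i => (hf i).isCoupling_mixture_product hg) (fun i => by fun_prop)
    (fun i y => (hf i).sum_mul_nonneg (fun _ => hg.sum_mul_nonneg (fun _ => sq_nonneg _) y) y)
    fun i => ?_
  rw [lintegral_ofReal_mixture (s := S i ×ˢ T) (w := fun p y => f i p.1 y * g p.2 y)
    (F := fun p _ => p) (c := fun p => ‖p.1 - p.2‖ ^ 2)
    (fun p => ((hf i).measurable p.1).mul (hg.measurable p.2))
    (fun p y => mul_nonneg ((hf i).nonneg _ _) (hg.nonneg _ _)) (fun _ => measurable_const)
    (by fun_prop) fun _ => sq_nonneg _]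
  simp_rw [Finset.sum_product, Finset.mul_sum, mul_assoc]

theorem psi_le_of_isMinimizer [IsProbabilityMeasure ν] (hμ : ∀ i, FinitelySupported (μ i))
    (hl : InSimplex l)
    (hopt : ∀ ν' : Measure (Pt d), IsProbabilityMeasure ν' → Psi l μ ν ≤ Psi l μ ν')
    (hη : FinitelySupported η) (hΨ : Psi l μ ν ≠ ∞) (hW : W2sq η ν ≠ ∞) {ε θ : ℝ}
    (hε : 0 < ε) (hθ : 0 < θ) :
    Psi l μ η ≤ Psi l μ ν + ENNReal.ofReal ε + ENNReal.ofReal θ⁻¹ * ENNReal.ofReal ε +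
      ENNReal.ofReal (1 + θ) * (W2sq η ν + ENNReal.ofReal ε) := by
  have hε0 : ENNReal.ofReal ε ≠ 0 := (ENNReal.ofReal_pos.2 hε).ne'
  choose S hS using hμ
  obtain ⟨T, hT⟩ := hη
  choose f hf hfcost using fun i => exists_isCondWeights_lintegral_lt (ae_iff.2 (hS i))
    (ENNReal.lt_add_right (W2sq_ne_top_of_psi_ne_top hl.1 hΨ i) hε0)
  obtain ⟨g, hg, hgcost⟩ := exists_isCondWeights_lintegral_lt (ae_iff.2 hT)
    (ENNReal.lt_add_right hW hε0)
  have := fun i => (hf i).measurable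
  have hM := measurable_condBarycenter l S fun i => (hf i).measurable
  have hK : ∫⁻ y, ENNReal.ofReal (∑ i, l i * ∑ x ∈ S i, f i x y * ‖x - y‖ ^ 2) ∂ν ≤
      Psi l μ ν + ENNReal.ofReal ε := by
    rw [lintegral_ofReal_sum_mul _ (fun i => (hl.1 i).le) (fun i => by fun_prop)
      (fun i y => (hf i).sum_mul_nonneg (fun _ => sq_nonneg _) y)]
    calc _ ≤ ∑ i, ENNReal.ofReal (l i) * (W2sq (μ i) ν + ENNReal.ofReal ε) := by
          gcongr with i
          exact (hfcost i).le
      _ = Psi l μ ν + ENNReal.ofReal ε := by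
          simp_rw [Psi, mul_add]
          rw [Finset.sum_add_distrib, ← Finset.sum_mul,
            ← ENNReal.ofReal_sum_of_nonneg fun i _ => (hl.1 i).le, hl.2, ENNReal.ofReal_one,
            one_mul]
  have hD : ∫⁻ y, ENNReal.ofReal (‖condBarycenter l S f y - y‖ ^ 2) ∂ν ≤ ENNReal.ofReal ε := by
    refine (ENNReal.add_le_add_iff_left hΨ).1 (le_trans ?_ hK)
    rw [← lintegral_condVariance_add_bias hl hf]
    gcongr
    exact (hopt _ (Measure.isProbabilityMeasure_map hM.aemeasurable)).trans
      (psi_map_condBarycenter_le (fun i => (hl.1 i).le) hf)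
  calc Psi l μ η ≤ _ := psi_le_lintegral_of_isCondWeights (fun i => (hl.1 i).le) hf hg
    _ ≤ _ := lintegral_sum_mul_sum_mul_sum_le hl hf hg hθ
    _ ≤ _ := by gcongr

end Barycenter

theorem stmt9_general {d N : ℕ} (μ : Fin N → Measure (Pt d))
    (hμ : ∀ i, IsProbabilityMeasure (μ i) ∧ FinitelySupported (μ i))
    (l : Fin N → ℝ) (hl : InSimplex l)
    (nuhat : Measure (Pt d)) (hν : IsProbabilityMeasure nuhat)
    (hopt : ∀ ν : Measure (Pt d), IsProbabilityMeasure ν → Psi l μ nuhat ≤ Psi l μ ν)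
    (nutil : Measure (Pt d))
    (hfs : FinitelySupported nutil) :
    Psi l μ nutil ≤ Psi l μ nuhat + W2sq nutil nuhat := by
  have := fun i => (hμ i).1
  rcases eq_or_ne (Psi l μ nuhat) ∞ with hΨ | hΨ
  · simp [hΨ]
  rcases eq_or_ne (W2sq nutil nuhat) ∞ with hW | hW
  · simp [hW]
  exact ENNReal.le_add_of_forall_pos_le hW fun ε θ hε hθ =>
    psi_le_of_isMinimizer (fun i => (hμ i).2) hl hopt hfs hΨ hW hε hθ

/-- If `ν̂` is an optimal barycenter, then for every finitely supported
probability measure `ν̃` we have `Ψ(ν̃) ≤ Ψ(ν̂) + W₂²(ν̃, ν̂)`. -/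
theorem stmt9 {d N : ℕ} (μ : Fin N → Measure (Pt d))
    (hμ : ∀ i, IsProbabilityMeasure (μ i) ∧ FinitelySupported (μ i))
    (l : Fin N → ℝ) (hl : InSimplex l)
    (nuhat : Measure (Pt d)) (hν : IsProbabilityMeasure nuhat)
    (hopt : ∀ ν : Measure (Pt d), IsProbabilityMeasure ν → Psi l μ nuhat ≤ Psi l μ ν)
    (nutil : Measure (Pt d)) (hν' : IsProbabilityMeasure nutil)
    (hfs : FinitelySupported nutil) :
    Psi l μ nutil ≤ Psi l μ nuhat + W2sq nutil nuhat :=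
  stmt9_general μ hμ l hl nuhat hν hopt nutil hfs
end
end
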